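/- arXiv:1210.7193 — 4 statements merged into one kernel-verified Lean document; each statement's English description precedes it below -/
import Mathlib

section
/- Let E and F be countable sets, H : E × F → ℝ bounded, and P a stochastic matrix on E. There exists a stochastic matrix Q on F satisfying the duality equation ∑_{x'} P(x,x') H(x',y) = ∑_{y'} Q(y,y') H(x,y') for all x ∈ E, y ∈ F if and only if the convex set V₁₊ = { f : E → ℝ | ∃ probability measure ν on F, ∀x, f(x) = ∑_y H(x,y) ν(y) } is invariant under P (i.e. f ∈ V₁₊ implies Pf ∈ V₁₊). -/
set_option maxHeartbeats 1000000

private lemma summable_of_dom {A : Type*} {f g : A → ℝ} (hg : Summable g)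
    (hb : ∀ a, |f a| ≤ g a) : Summable f :=
  (Summable.of_nonneg_of_le (fun a => abs_nonneg _) hb hg).of_abs

private lemma tsum_swap_of_dom {A B : Type*} {f : A → B → ℝ} {g : A × B → ℝ}
    (hg : Summable g) (hb : ∀ a b, |f a b| ≤ g (a, b)) :
    ∑' b, ∑' a, f a b = ∑' a, ∑' b, f a b := by
  refine Summable.tsum_comm' (summable_of_dom hg ?_) (fun a => summable_of_dom (hg.prod_factor a) ?_)
    (fun b => summable_of_dom ((hg.prod_symm).prod_factor b) ?_)
  · exact fun p => hb p.1 p.2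
  · exact fun b => hb a b
  · exact fun a => hb a b

/-- Discrete-space existence of a dual: a stochastic matrix `Q` on `F` dual to `P`
with respect to `H` exists iff the convex set `V₁₊` is invariant under `P`. -/
theorem stmt0 {E F : Type*} [Countable E] [Countable F]
    (H : E → F → ℝ) (hH : ∃ C, ∀ x y, |H x y| ≤ C)
    (P : E → E → ℝ) (hP0 : ∀ x x', 0 ≤ P x x') (hP1 : ∀ x, HasSum (P x) 1) :
    (∃ Q : F → F → ℝ, (∀ y y', 0 ≤ Q y y') ∧ (∀ y, HasSum (Q y) 1) ∧
        ∀ x y, (∑' x', P x x' * H x' y) = ∑' y', Q y y' * H x y') ↔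
      (∀ f : E → ℝ,
        (∃ ν : F → ℝ, (∀ y, 0 ≤ ν y) ∧ HasSum ν 1 ∧ ∀ x, f x = ∑' y, H x y * ν y) →
        (∃ ν : F → ℝ, (∀ y, 0 ≤ ν y) ∧ HasSum ν 1 ∧
          ∀ x, (∑' x', P x x' * f x') = ∑' y, H x y * ν y)) := by
  obtain ⟨C₀, hC₀⟩ := hH
  set C := max C₀ 0 with hCdef
  have hC : ∀ x y, |H x y| ≤ C := fun x y => (hC₀ x y).trans (le_max_left _ _)
  have hC0 : 0 ≤ C := le_max_right _ _
  constructor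
  · rintro ⟨Q, hQ0, hQ1, hdual⟩ f ⟨ν, hν0, hν1, hf⟩
    have hνS : Summable ν := hν1.summable
    have hQS : ∀ y, Summable (Q y) := fun y => (hQ1 y).summable
    have hQle1 : ∀ y y', Q y y' ≤ 1 := fun y y' =>
      le_hasSum (hQ1 y) y' (fun j _ => hQ0 y j)
    -- summability of the product family ν y * Q y y'
    have hprod0 : 0 ≤ fun p : F × F => ν p.1 * Q p.1 p.2 :=
      fun p => mul_nonneg (hν0 _) (hQ0 _ _)
    have hprod : Summable (fun p : F × F => ν p.1 * Q p.1 p.2) := by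
      refine (summable_prod_of_nonneg hprod0).2 ⟨fun y => by simpa using (hQS y).mul_left (ν y), ?_⟩
      have heq : (fun y => ∑' y', ν y * Q y y') = ν := by
        funext y
        rw [tsum_mul_left, (hQ1 y).tsum_eq, mul_one]
      rw [heq]
      exact hνS
    set ν' : F → ℝ := fun y' => ∑' y, ν y * Q y y' with hν'def
    have hν'0 : ∀ y', 0 ≤ ν' y' := fun y' =>
      tsum_nonneg (fun y => mul_nonneg (hν0 y) (hQ0 y y'))
    have hν'S : Summable ν' := by
      have := (summable_prod_of_nonneg (f := fun p : F × F => ν p.2 * Q p.2 p.1)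
        (fun p => mul_nonneg (hν0 _) (hQ0 _ _))).1 hprod.prod_symm
      exact this.2
    have hν'1 : HasSum ν' 1 := by
      rw [hν'S.hasSum_iff]
      have hswap : ∑' y', ∑' y, ν y * Q y y' = ∑' y, ∑' y', ν y * Q y y' :=
        tsum_swap_of_dom (f := fun y y' => ν y * Q y y') hprod
          (fun y y' => by rw [abs_of_nonneg (mul_nonneg (hν0 y) (hQ0 y y'))])
      rw [hν'def]
      rw [hswap]
      have : ∀ y, (∑' y', ν y * Q y y') = ν y := fun y => by
        rw [tsum_mul_left, (hQ1 y).tsum_eq, mul_one]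
      simp only [this]
      exact hν1.tsum_eq
    refine ⟨ν', hν'0, hν'1, fun x => ?_⟩
    have hPS : Summable (P x) := (hP1 x).summable
    -- step 1: plug in f
    have e1 : ∑' x', P x x' * f x' = ∑' x', ∑' y, P x x' * (H x' y * ν y) := by
      refine tsum_congr fun x' => ?_
      rw [hf x', tsum_mul_left]
    -- step 2: swap
    have hdom1 : Summable (fun p : E × F => C * (P x p.1 * ν p.2)) :=
      (hPS.mul_of_nonneg hνS (hP0 x) hν0).mul_left C
    have e2 : ∑' x', ∑' y, P x x' * (H x' y * ν y)
        = ∑' y, ∑' x', P x x' * (H x' y * ν y) := by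
      refine (tsum_swap_of_dom (f := fun x' y => P x x' * (H x' y * ν y)) hdom1 ?_).symm
      intro x' y
      have : |P x x' * (H x' y * ν y)| = P x x' * |H x' y| * ν y := by
        rw [abs_mul, abs_mul, abs_of_nonneg (hP0 x x'), abs_of_nonneg (hν0 y), mul_assoc]
      rw [this]
      calc P x x' * |H x' y| * ν y ≤ P x x' * C * ν y := by
            apply mul_le_mul_of_nonneg_right _ (hν0 y)
            exact mul_le_mul_of_nonneg_left (hC x' y) (hP0 x x')
        _ = C * (P x x' * ν y) := by ring
    -- step 3: use duality
    have e3 : ∑' y, ∑' x', P x x' * (H x' y * ν y)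
        = ∑' y, ∑' y', ν y * Q y y' * H x y' := by
      refine tsum_congr fun y => ?_
      have : ∑' x', P x x' * (H x' y * ν y) = (∑' x', P x x' * H x' y) * ν y := by
        rw [← tsum_mul_right]
        exact tsum_congr fun x' => by ring
      rw [this, hdual x y, ← tsum_mul_right]
      exact tsum_congr fun y' => by ring
    -- step 4: swap back
    have hdom2 : Summable (fun p : F × F => C * (ν p.1 * Q p.1 p.2)) :=
      hprod.mul_left C
    have e4 : ∑' y, ∑' y', ν y * Q y y' * H x y'
        = ∑' y', ∑' y, ν y * Q y y' * H x y' := by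
      refine (tsum_swap_of_dom (f := fun y y' => ν y * Q y y' * H x y') hdom2 ?_)|>.symm
      intro y y'
      have : |ν y * Q y y' * H x y'| = ν y * Q y y' * |H x y'| := by
        rw [abs_mul, abs_of_nonneg (mul_nonneg (hν0 y) (hQ0 y y'))]
      rw [this]
      calc ν y * Q y y' * |H x y'| ≤ ν y * Q y y' * C :=
            mul_le_mul_of_nonneg_left (hC x y') (mul_nonneg (hν0 y) (hQ0 y y'))
        _ = C * (ν y * Q y y') := by ring
    -- step 5: assemble
    rw [e1, e2, e3, e4]
    exact tsum_congr fun y' => tsum_mul_right.trans (mul_comm _ _)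
  · intro h
    classical
    have key : ∀ y : F, ∃ ν : F → ℝ, (∀ y', 0 ≤ ν y') ∧ HasSum ν 1 ∧
        ∀ x, (∑' x', P x x' * H x' y) = ∑' y', H x y' * ν y' := by
      intro y
      refine h (fun x => H x y) ⟨fun y' => if y' = y then 1 else 0, ?_, ?_, ?_⟩
      · intro y'; dsimp only; split <;> norm_num
      · exact hasSum_ite_eq y 1
      · intro x
        simp only [mul_ite, mul_one, mul_zero]
        rw [tsum_eq_single y (fun b hb => if_neg hb), if_pos rfl]
    choose Q hQ0 hQ1 hdual using key
    exact ⟨Q, hQ0, hQ1, fun x y => (hdual y x).trans (tsum_congr fun y' => mul_comm _ _)⟩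
end

section
/- Let Λ be a finite set and let H : 𝒫(Λ) × 𝒫(Λ) → ℝ be the coalescing duality function H(A,B) = 1 if A ∩ B = ∅ and 0 otherwise. Then H, viewed as a square matrix indexed by the power set of Λ, is invertible. -/
/-- The coalescing duality matrix `H(A,B) = 1_{A ∩ B = ∅}` on the power set of a
finite set is invertible. -/
theorem stmt5 {Λ : Type*} [Fintype Λ] [DecidableEq Λ] :
    IsUnit (Matrix.of (fun A B : Finset Λ => if A ∩ B = ∅ then (1:ℝ) else 0)) := by
  set M : Matrix (Finset Λ) (Finset Λ) ℝ :=
    Matrix.of (fun A B : Finset Λ => if A ∩ B = ∅ then (1:ℝ) else 0) with hM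
  rw [Matrix.isUnit_iff_isUnit_det, isUnit_iff_ne_zero]
  intro hdet
  obtain ⟨v, hv, hmv⟩ := (Matrix.exists_mulVec_eq_zero_iff).2 hdet
  apply hv
  funext B0
  induction B0 using Finset.strongInductionOn with
  | _ B0 ih =>
    have hA := congrFun hmv B0ᶜ
    simp only [Matrix.mulVec, dotProduct, hM, Matrix.of_apply, ite_mul, one_mul,
      zero_mul, Pi.zero_apply] at hA
    have hcond : ∀ B : Finset Λ, (B0ᶜ ∩ B = ∅) ↔ B ∈ B0.powerset := by
      intro B
      simp only [Finset.mem_powerset, Finset.eq_empty_iff_forall_notMem, Finset.mem_inter,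
        Finset.mem_compl, Finset.subset_iff]
      constructor
      · intro h x hxB
        by_contra hx
        exact h x ⟨hx, hxB⟩
      · intro h x ⟨hx1, hx2⟩
        exact hx1 (h hx2)
    have hA' : ∑ B ∈ B0.powerset, v B = 0 := by
      rw [← hA, ← Finset.univ_inter B0.powerset, ← Finset.sum_ite_mem]
      exact Finset.sum_congr rfl (fun x _ => by simp only [hcond x])
    have hsplit : ∑ B ∈ B0.powerset, v B = v B0 + ∑ B ∈ B0.powerset.erase B0, v B := by
      rw [Finset.add_sum_erase _ _ (Finset.mem_powerset_self B0)]
    have hzero : ∑ B ∈ B0.powerset.erase B0, v B = 0 := by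
      apply Finset.sum_eq_zero
      intro C hC
      rw [Finset.mem_erase, Finset.mem_powerset] at hC
      exact ih C (lt_of_le_of_ne hC.2 hC.1)
    have := hA'
    rw [hsplit, hzero, add_zero] at this
    exact this
end

section
/- Let E be a countable set, (X_t) and (Y_t) Markov chains on E with transition matrices P_t and Q_t, dual with respect to a diagonal duality function H(x,y) = h(x)·1_{x=y}. Define μ(x) = 1/|h(x)| if h(x) ≠ 0 and μ(x) = 0 otherwise. Then the set {x : h(x) = 0} is a trap for both chains (i.e. Q_t(y,x) = 0 and P_t(y,x) = 0 whenever h(y) = 0 and h(x) ≠ 0), and the killed sub-Markov kernels restricted to supp μ are in weak duality with respect to μ: μ(x) P_t(x,y) = μ(y) Q_t(y,x) for all x, y ∈ supp μ. -/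
/-- Diagonal duality and duality with respect to a measure: if two Markov chains on a
countable set are dual with respect to the diagonal duality function
`H(x,y) = h(x)·1_{x=y}`, then `{h = 0}` is a trap for both chains, and on the support of
`μ(x) = 1/|h(x)|` the killed kernels are in weak duality with respect to `μ`. -/
theorem stmt12 {E : Type*} [Countable E]
    (P Q : ℝ → E → E → ℝ) (h : E → ℝ)
    (hP0 : ∀ t, 0 ≤ t → ∀ x y, 0 ≤ P t x y)
    (hP1 : ∀ t, 0 ≤ t → ∀ x, HasSum (P t x) 1)
    (hQ0 : ∀ t, 0 ≤ t → ∀ x y, 0 ≤ Q t x y)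
    (hQ1 : ∀ t, 0 ≤ t → ∀ x, HasSum (Q t x) 1)
    (hdual : ∀ t, 0 ≤ t → ∀ x y, P t x y * h y = Q t y x * h x) :
    (∀ t, 0 ≤ t → ∀ x y, h y = 0 → h x ≠ 0 → Q t y x = 0 ∧ P t y x = 0) ∧
    (∀ t, 0 ≤ t → ∀ x y,
      (if h x = 0 then (0:ℝ) else 1 / |h x|) > 0 →
      (if h y = 0 then (0:ℝ) else 1 / |h y|) > 0 →
      (if h x = 0 then (0:ℝ) else 1 / |h x|) * P t x y =
        (if h y = 0 then (0:ℝ) else 1 / |h y|) * Q t y x) := by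
  constructor
  · intro t ht x y hy hx
    have h1 := hdual t ht x y
    have h2 := hdual t ht y x
    rw [hy] at h1 h2
    constructor
    · have : Q t y x * h x = 0 := by linarith
      exact (mul_eq_zero.mp this).resolve_right hx
    · have : P t y x * h x = 0 := by linarith
      exact (mul_eq_zero.mp this).resolve_right hx
  · intro t ht x y hx hy
    by_cases hhx : h x = 0
    · simp [hhx] at hx
    by_cases hhy : h y = 0
    · simp [hhy] at hy
    have key := hdual t ht x y
    have hpx := hP0 t ht x y
    have hqx := hQ0 t ht y x
    have h1 : P t x y * |h y| = Q t y x * |h x| := by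
      have := congrArg abs key
      rwa [abs_mul, abs_mul, abs_of_nonneg hpx, abs_of_nonneg hqx] at this
    simp only [if_neg hhx, if_neg hhy]
    have ax : |h x| > 0 := abs_pos.mpr hhx
    have ay : |h y| > 0 := abs_pos.mpr hhy
    field_simp
    linarith [h1]
end

section
/- Let E, F be finite sets, H : E × F → ℝ a matrix inducing an injective map on signed measures in both variables (i.e. H and its transpose have trivial kernels as linear maps). Let P and Q be stochastic matrices on E and F with reversible probability measures μ and ν (µ(x)P(x,y) = µ(y)P(y,x) and similarly for Q, ν), with μ, ν strictly positive, and suppose P H = H Qᵀ. Then P, viewed as a self-adjoint operator on ℝ^E with inner product ⟨f,g⟩_μ = ∑ μ(x) f(x) g(x), and Q on ℝ^F with ⟨·,·⟩_ν, have the same eigenvalues with the same multiplicities. -/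
/-!
Injectivity of `H` and of `Hᵀ` forces `|E| = |F|`, so `H` is invertible and the duality
`P H = H Qᵀ` exhibits `P` as similar to `Qᵀ`, whose characteristic polynomial is that of `Q`.
-/

open Function

namespace Matrix

variable {E F : Type*} [Fintype E] [Fintype F]

theorem mulVec_bijective_of_injective_of_injective_transpose {K : Type*} [Field K]
    {H : Matrix E F K} (hl : Injective H.mulVec) (hr : Injective Hᵀ.mulVec) :
    Bijective H.mulVec := by
  have hdim : Module.finrank K (F → K) = Module.finrank K (E → K) :=
    le_antisymm (LinearMap.finrank_le_finrank_of_injective (f := H.mulVecLin) hl)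
      (LinearMap.finrank_le_finrank_of_injective (f := Hᵀ.mulVecLin) hr)
  exact ⟨hl,
    (LinearMap.injective_iff_surjective_of_finrank_eq_finrank (f := H.mulVecLin) hdim).mp hl⟩

theorem charpoly_eq_of_mul_eq_mul [DecidableEq E] [DecidableEq F] {R : Type*} [CommRing R]
    {P : Matrix E E R} {Q : Matrix F F R} {H : Matrix E F R} (hH : Bijective H.mulVec)
    (hPQ : P * H = H * Q) : P.charpoly = Q.charpoly := by
  let e : (F → R) ≃ₗ[R] (E → R) := LinearEquiv.ofBijective H.mulVecLin hH
  have hconj : e.conj Q.mulVecLin = P.mulVecLin := by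
    refine LinearMap.ext fun x => ?_
    obtain ⟨y, rfl⟩ := hH.surjective x
    have hy : e.symm (H *ᵥ y) = y := e.symm_apply_apply y
    simp only [LinearEquiv.conj_apply_apply, mulVecLin_apply, hy]
    calc H *ᵥ (Q *ᵥ y) = (H * Q) *ᵥ y := mulVec_mulVec _ _ _
      _ = P *ᵥ (H *ᵥ y) := by rw [← hPQ, mulVec_mulVec]
  rw [← charpoly_mulVecLin P, ← hconj, LinearEquiv.charpoly_conj, charpoly_mulVecLin]

end Matrix

theorem stmt14_general {E F : Type*} [Fintype E] [Fintype F] [DecidableEq E] [DecidableEq F]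
    (H : Matrix E F ℝ)
    (hHl : Function.Injective H.mulVec)
    (hHr : Function.Injective H.transpose.mulVec)
    (P : Matrix E E ℝ) (Q : Matrix F F ℝ)
    (hdual : P * H = H * Q.transpose) :
    P.charpoly = Q.charpoly := by
  rw [Matrix.charpoly_eq_of_mul_eq_mul
    (Matrix.mulVec_bijective_of_injective_of_injective_transpose hHl hHr) hdual,
    Matrix.charpoly_transpose]

/-- Reversible Markov chains that are dual with respect to a non-degenerate duality
function have the same eigenvalues with the same multiplicities (equal characteristic
polynomials). -/
theorem stmt14 {E F : Type*} [Fintype E] [Fintype F] [DecidableEq E] [DecidableEq F]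
    (H : Matrix E F ℝ)
    (hHl : Function.Injective H.mulVec)
    (hHr : Function.Injective H.transpose.mulVec)
    (P : Matrix E E ℝ) (Q : Matrix F F ℝ) (μ : E → ℝ) (ν : F → ℝ)
    (hP0 : ∀ x y, 0 ≤ P x y) (hP1 : ∀ x, (∑ y, P x y) = 1)
    (hQ0 : ∀ x y, 0 ≤ Q x y) (hQ1 : ∀ x, (∑ y, Q x y) = 1)
    (hμpos : ∀ x, 0 < μ x) (hμ1 : (∑ x, μ x) = 1)
    (hνpos : ∀ y, 0 < ν y) (hν1 : (∑ y, ν y) = 1)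
    (hμrev : ∀ x y, μ x * P x y = μ y * P y x)
    (hνrev : ∀ x y, ν x * Q x y = ν y * Q y x)
    (hdual : P * H = H * Q.transpose) :
    P.charpoly = Q.charpoly :=
  stmt14_general H hHl hHr P Q hdual
end
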